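/- Let m ≠ 0, λ, and κ ≠ 0 be real constants. Consider on ℝ⁴ with coordinates (τ,x,y,z) the Bianchi V metric g = diag(−e^{mκτ}, e^{mκτ}, e^{m(κ−1)τ}e^{2x}, e^{m(κ−λ)τ}e^{2x}) (this is the metric of Proposition 2 with A(τ)² = e^{m(κ−λ)τ}). Then the vector field L₁ with components (2/m, 0, y, λz) is a homothetic vector of g with constant conformal factor ψ ≡ κ. -/

import Mathlib

open Real

/-- Partial derivative of a scalar function on `ℝⁿ` with respect to the `c`-th coordinate. -/
noncomputable def pd {n : ℕ} (f : (Fin n → ℝ) → ℝ) (c : Fin n) (p : Fin n → ℝ) : ℝ :=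
  fderiv ℝ f p (Pi.single c 1)

/-- `X` is a conformal Killing vector of the metric `g` with conformal factor `ψ`:
for all indices `a b` and all points `p`,
`Σ_c [X^c ∂_c g_{ab} + g_{cb} ∂_a X^c + g_{ac} ∂_b X^c] = 2 ψ g_{ab}`. -/
def IsCKV {n : ℕ} (g : (Fin n → ℝ) → Matrix (Fin n) (Fin n) ℝ)
    (X : (Fin n → ℝ) → (Fin n → ℝ)) (ψ : (Fin n → ℝ) → ℝ) : Prop :=
  ∀ (a b : Fin n) (p : Fin n → ℝ),
    (∑ c, (X p c * pd (fun q => g q a b) c p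
      + g p c b * pd (fun q => X q c) a p
      + g p a c * pd (fun q => X q c) b p)) = 2 * ψ p * g p a b


lemma hasFDerivAt_klin (k : ℝ) (i : Fin 4) (p : Fin 4 → ℝ) :
    HasFDerivAt (fun q : Fin 4 → ℝ => k * q i)
      (k • (ContinuousLinearMap.proj i : (Fin 4 → ℝ) →L[ℝ] ℝ)) p :=
  ((ContinuousLinearMap.proj i : (Fin 4 → ℝ) →L[ℝ] ℝ).hasFDerivAt).const_mul k

lemma hasFDerivAt_expk (k : ℝ) (i : Fin 4) (p : Fin 4 → ℝ) :
    HasFDerivAt (fun q : Fin 4 → ℝ => Real.exp (k * q i))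
      (Real.exp (k * p i) • (k • (ContinuousLinearMap.proj i : (Fin 4 → ℝ) →L[ℝ] ℝ))) p :=
  by have := (Real.hasDerivAt_exp (k * p i)).comp_hasFDerivAt p (hasFDerivAt_klin k i p); exact this

lemma pd_expk (k : ℝ) (i c : Fin 4) (p : Fin 4 → ℝ) :
    pd (fun q => Real.exp (k * q i)) c p
      = Real.exp (k * p i) * (k * (Pi.single c 1 : Fin 4 → ℝ) i) := by
  unfold pd
  rw [(hasFDerivAt_expk k i p).fderiv]
  simp

lemma pd_neg_expk (k : ℝ) (i c : Fin 4) (p : Fin 4 → ℝ) :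
    pd (fun q => -Real.exp (k * q i)) c p
      = -(Real.exp (k * p i) * (k * (Pi.single c 1 : Fin 4 → ℝ) i)) := by
  unfold pd
  rw [(show HasFDerivAt (fun q : Fin 4 → ℝ => -Real.exp (k * q i)) _ p from (hasFDerivAt_expk k i p).neg).fderiv]
  simp

lemma pd_expmul (k l : ℝ) (c : Fin 4) (p : Fin 4 → ℝ) :
    pd (fun q => Real.exp (k * q 0) * Real.exp (l * q 1)) c p
      = Real.exp (k * p 0) * Real.exp (l * p 1)
        * (k * (Pi.single c 1 : Fin 4 → ℝ) 0 + l * (Pi.single c 1 : Fin 4 → ℝ) 1) := by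
  unfold pd
  rw [(show HasFDerivAt (fun q : Fin 4 → ℝ => Real.exp (k * q 0) * Real.exp (l * q 1)) _ p from (hasFDerivAt_expk k 0 p).mul (hasFDerivAt_expk l 1 p)).fderiv]
  simp
  ring

lemma pd_coord (i c : Fin 4) (p : Fin 4 → ℝ) :
    pd (fun q => q i) c p = (Pi.single c 1 : Fin 4 → ℝ) i := by
  unfold pd
  rw [show (fun q : Fin 4 → ℝ => q i) = ⇑(ContinuousLinearMap.proj i : (Fin 4 → ℝ) →L[ℝ] ℝ) from rfl,
    (ContinuousLinearMap.proj i : (Fin 4 → ℝ) →L[ℝ] ℝ).hasFDerivAt.fderiv]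
  simp

lemma pd_klin (k : ℝ) (i c : Fin 4) (p : Fin 4 → ℝ) :
    pd (fun q => k * q i) c p = k * (Pi.single c 1 : Fin 4 → ℝ) i := by
  unfold pd
  rw [(hasFDerivAt_klin k i p).fderiv]
  simp

lemma pd_const (r : ℝ) (c : Fin 4) (p : Fin 4 → ℝ) :
    pd (fun _ => r) c p = 0 := by
  unfold pd
  rw [fderiv_fun_const]
  simp

/-- `L₁ = (2/m, 0, y, λz)` is a homothetic vector of the Bianchi V
metric `g = diag(−e^{mκτ}, e^{mκτ}, e^{m(κ−1)τ}e^{2x}, e^{m(κ−λ)τ}e^{2x})` with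
constant conformal factor `κ`. -/
theorem L1_is_HV_BianchiV (m lam kap : ℝ) (hm : m ≠ 0) (hkap : kap ≠ 0) :
    IsCKV
      (fun p : Fin 4 → ℝ =>
        Matrix.diagonal
          ![-Real.exp (m * kap * p 0),
            Real.exp (m * kap * p 0),
            Real.exp (m * (kap - 1) * p 0) * Real.exp (2 * p 1),
            Real.exp (m * (kap - lam) * p 0) * Real.exp (2 * p 1)])
      (fun p : Fin 4 → ℝ => ![2 / m, 0, p 2, lam * p 3])
      (fun _ => kap) := by
  intro a b p
  fin_cases a <;> fin_cases b <;>
    simp [Fin.sum_univ_four, Matrix.diagonal_apply, Pi.single_apply, pd_const,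
      pd_coord, pd_klin, pd_expk, pd_neg_expk, pd_expmul] <;>
    field_simp <;> ring
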